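/- Let n be an odd integer with n ≥ 5, T = {an + b(3n−2) + c(3n−1) : a,b,c ∈ ℕ}, F(T) = n(3n−7)/2 + 2, and S = T ∪ {F(T)}. An element s ∈ Ap(S, F(T)) has exactly one factorization (i.e. #Z(s) = 1) if and only if its normal form nf(s) = (x,y,z) satisfies one of the following disjoint conditions: (1) (x,0,0) with 0 ≤ x ≤ (3n−3)/2; (2) (x,0,1) with 0 ≤ x ≤ (3n−7)/2; (3) (2,y,0) with 1 ≤ y ≤ (n−3)/2; (4) (x,y,0) with 0 ≤ x ≤ 1 and 1 ≤ y ≤ (n−1)/2; (5) (x,y,1) with 0 ≤ x ≤ 2 and 1 ≤ y ≤ (n−5)/2. -/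
import Mathlib


/-- The numerical semigroup `T = ⟨n, 3n-2, 3n-1⟩` as a subset of `ℕ`. -/
def Tset (n : ℕ) : Set ℕ :=
  {s | ∃ a b c : ℕ, s = a * n + b * (3 * n - 2) + c * (3 * n - 1)}

/-- The Frobenius number of `T`, `F(T) = n(3n-7)/2 + 2` (exact division since `n` is odd). -/
def FT (n : ℕ) : ℕ := n * (3 * n - 7) / 2 + 2

/-- The numerical semigroup `S = T ∪ {F(T)} = ⟨n, 3n-2, 3n-1, F(T)⟩`. -/
def Sset (n : ℕ) : Set ℕ := Tset n ∪ {FT n}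

/-- The Apéry set `Ap(S, F(T)) = {s ∈ S | s - F(T) ∉ S}`. -/
def Ap (n : ℕ) : Set ℕ := {s ∈ Sset n | ¬ ∃ t ∈ Sset n, t + FT n = s}

/-- `phi n (x,y,z) = xn + y(3n-2) + z(3n-1)`. -/
def phi (n : ℕ) (p : ℕ × ℕ × ℕ) : ℕ :=
  p.1 * n + p.2.1 * (3 * n - 2) + p.2.2 * (3 * n - 1)

/-- The set of factorizations of `s` with respect to `(n, 3n-2, 3n-1)`. -/
def Zfac (n s : ℕ) : Set (ℕ × ℕ × ℕ) := {p | phi n p = s}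

/-- `p` is the normal form of `s`: a factorization with `z < 2`, `y < (n+1)/2`,
`x < (3n-1)/2`. -/
def IsNF (n s : ℕ) (p : ℕ × ℕ × ℕ) : Prop :=
  p ∈ Zfac n s ∧ p.2.2 < 2 ∧ p.2.1 < (n + 1) / 2 ∧ p.1 < (3 * n - 1) / 2

/-- `M_i`: elements of the Apéry set having exactly `i` factorizations. -/
def Mset (n i : ℕ) : Set ℕ := {s ∈ Ap n | (Zfac n s).ncard = i}

/-- `nf(M_i)`: normal forms of elements of `M_i`. -/
def nfM (n i : ℕ) : Set (ℕ × ℕ × ℕ) := {p | ∃ s ∈ Mset n i, IsNF n s p}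

/-- An L-shape associated with `Ap(S, F(T))`: (C1) `phi` is a bijection from `L` onto the
Apéry set; (C2) `L` is downward closed for the componentwise order. -/
def IsLShape (n : ℕ) (L : Set (ℕ × ℕ × ℕ)) : Prop :=
  Set.BijOn (phi n) L (Ap n) ∧ ∀ u ∈ L, ∀ v : ℕ × ℕ × ℕ, v ≤ u → v ∈ L

/-- The L-shape `F = F₁ ∪ F₂ ∪ F₃ ∪ F₄` (in `F₃`, `y ≤ (n-7)/2` is stated over the
integers as `2y + 7 ≤ n`, so that `F₃ = ∅` when `n = 5`). -/
def Fset (n : ℕ) : Set (ℕ × ℕ × ℕ) :=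
  {p | p.2.2 = 0 ∧ p.1 ≤ (3 * n - 3) / 2 ∧ p.2.1 ≤ (n - 3) / 2} ∪
  {p | p.2.2 = 0 ∧ p.1 ≤ 1 ∧ p.2.1 = (n - 1) / 2} ∪
  {p | p.2.2 = 1 ∧ p.1 ≤ (3 * n - 3) / 2 ∧ 2 * p.2.1 + 7 ≤ n} ∪
  {p | p.2.2 = 1 ∧ p.1 ≤ (3 * n - 5) / 2 ∧ p.2.1 = (n - 5) / 2}

/-- Membership in `Zfac` for `n = 2j+5`, with the truncated subtractions resolved. -/
lemma mem_Zfac (j s a b c : ℕ) :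
    (a, b, c) ∈ Zfac (2*j+5) s ↔ a*(2*j+5) + b*(6*j+13) + c*(6*j+14) = s := by
  have e2 : 3*(2*j+5) - 2 = 6*j+13 := by omega
  have e3 : 3*(2*j+5) - 1 = 6*j+14 := by omega
  simp [Zfac, phi, e2, e3]

/-- The Frobenius number for `n = 2j+5`. -/
lemma FT_eq (j : ℕ) : FT (2*j+5) = 6*(j*j) + 23*j + 22 := by
  have h : (2*j+5) * (6*j+8) = 12*(j*j) + 46*j + 40 := by ring
  have e7 : 3*(2*j+5) - 7 = 6*j+8 := by omega
  unfold FT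
  rw [e7]
  omega

/-- Key uniqueness lemma: a factorization of an element whose "normal form"
satisfies the region conditions must equal that normal form. -/
lemma key (j a b c x y z : ℕ)
    (heq : a*(2*j+5) + b*(6*j+13) + c*(6*j+14) = x*(2*j+5) + y*(6*j+13) + z*(6*j+14))
    (hz : z ≤ 1) (hy : y ≤ j+2) (hx : x ≤ 3*j+6)
    (hr1 : ¬(y = j+2 ∧ z = 1)) (hr2 : 1 ≤ y → x ≤ 2) (hr3 : z = 1 → x ≤ 3*j+4) :
    a = x ∧ b = y ∧ c = z := by
  have heq' : (a:ℤ)*(2*j+5) + b*(6*j+13) + c*(6*j+14)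
      = (x:ℤ)*(2*j+5) + y*(6*j+13) + z*(6*j+14) := by exact_mod_cast heq
  set m : ℤ := (a:ℤ)+3*b+3*c-x-3*y-3*z with hm
  have h1 : m * (2*(j:ℤ)+5) = 2*(b:ℤ)+c-2*y-z := by rw [hm]; linear_combination heq'
  have h2 : m * (6*(j:ℤ)+13) = 2*(x:ℤ)+3*z-2*a-3*c := by rw [hm]; linear_combination 3*heq'
  have hx' : (x:ℤ) ≤ 3*j+6 := by exact_mod_cast hx
  have hy' : (y:ℤ) ≤ j+2 := by exact_mod_cast hy
  have hz' : (z:ℤ) ≤ 1 := by exact_mod_cast hz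
  have ha' : (0:ℤ) ≤ a := Int.ofNat_nonneg a
  have hb' : (0:ℤ) ≤ b := Int.ofNat_nonneg b
  have hc' : (0:ℤ) ≤ c := Int.ofNat_nonneg c
  have hyz : (0:ℤ) ≤ y := Int.ofNat_nonneg y
  have hzz : (0:ℤ) ≤ z := Int.ofNat_nonneg z
  have hub : m ≤ 1 := by
    by_contra h
    push_neg at h
    have h2' := mul_le_mul_of_nonneg_right (by linarith : (2:ℤ) ≤ m)
      (by positivity : (0:ℤ) ≤ 6*(j:ℤ)+13)
    linarith
  have hlb : -1 ≤ m := by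
    by_contra h
    push_neg at h
    have h1' := mul_le_mul_of_nonneg_right (by linarith : m ≤ -2)
      (by positivity : (0:ℤ) ≤ 2*(j:ℤ)+5)
    linarith
  have hm3 : m = -1 ∨ m = 0 ∨ m = 1 := by omega
  rcases hm3 with h | h | h <;> rw [h] at h1 <;> rw [h] at hm <;> omega

/-- An element of the Apéry set has a unique factorization iff its normal form
satisfies one of five disjoint conditions. -/
theorem stmt7 (n : ℕ) (hodd : Odd n) (hn : 5 ≤ n) :
    ∀ s ∈ Ap n, ((Zfac n s).ncard = 1 ↔
      ∃ x y z : ℕ, IsNF n s (x, y, z) ∧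
        ((y = 0 ∧ z = 0 ∧ x ≤ (3 * n - 3) / 2) ∨
         (y = 0 ∧ z = 1 ∧ x ≤ (3 * n - 7) / 2) ∨
         (x = 2 ∧ z = 0 ∧ 1 ≤ y ∧ y ≤ (n - 3) / 2) ∨
         (x ≤ 1 ∧ z = 0 ∧ 1 ≤ y ∧ y ≤ (n - 1) / 2) ∨
         (x ≤ 2 ∧ z = 1 ∧ 1 ≤ y ∧ y ≤ (n - 5) / 2))) := by
  obtain ⟨j, hj⟩ : ∃ j, n = 2*j+5 := by
    obtain ⟨t, ht⟩ := hodd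
    exact ⟨t - 2, by omega⟩
  subst hj
  have e2 : 3*(2*j+5) - 2 = 6*j+13 := by omega
  have e3 : 3*(2*j+5) - 1 = 6*j+14 := by omega
  have hF := FT_eq j
  intro s hs
  obtain ⟨hs1, hs2⟩ := hs
  constructor
  · -- forward direction
    intro hcard
    obtain ⟨⟨a, b, c⟩, hp⟩ := Set.ncard_eq_one.mp hcard
    have hpm : (a, b, c) ∈ Zfac (2*j+5) s := by rw [hp]; rfl
    have heq : a*(2*j+5) + b*(6*j+13) + c*(6*j+14) = s := (mem_Zfac j s a b c).mp hpm
    -- c ≤ 1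
    have hc : c ≤ 1 := by
      by_contra h
      push_neg at h
      obtain ⟨c', rfl⟩ : ∃ c', c = c' + 2 := ⟨c - 2, by omega⟩
      have hq : (a+3, b+1, c') ∈ Zfac (2*j+5) s :=
        (mem_Zfac j s _ _ _).mpr (by rw [← heq]; ring)
      rw [hp, Set.mem_singleton_iff] at hq
      simp only [Prod.mk.injEq] at hq
      omega
    -- b ≤ j+2
    have hb : b ≤ j+2 := by
      by_contra h
      push_neg at h
      obtain ⟨b', rfl⟩ : ∃ b', b = b' + (j+3) := ⟨b - (j+3), by omega⟩
      have hq : (a+(3*j+5), b', c+1) ∈ Zfac (2*j+5) s :=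
        (mem_Zfac j s _ _ _).mpr (by rw [← heq]; ring)
      rw [hp, Set.mem_singleton_iff] at hq
      simp only [Prod.mk.injEq] at hq
      omega
    -- a ≤ 3j+6
    have ha : a ≤ 3*j+6 := by
      by_contra h
      push_neg at h
      obtain ⟨a', rfl⟩ : ∃ a', a = a' + (3*j+7) := ⟨a - (3*j+7), by omega⟩
      exact hs2 ⟨a'*(2*j+5) + (b+1)*(6*j+13) + c*(6*j+14),
        Or.inl ⟨a', b+1, c, by rw [e2, e3]⟩,
        by rw [hF, ← heq]; ring⟩
    -- if b ≥ 1 then a ≤ 2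
    have r2 : b = 0 ∨ a ≤ 2 := by
      by_cases h0 : b = 0
      · exact Or.inl h0
      right
      by_contra h
      push_neg at h
      obtain ⟨a', rfl⟩ : ∃ a', a = a' + 3 := ⟨a - 3, by omega⟩
      obtain ⟨b', rfl⟩ : ∃ b', b = b' + 1 := ⟨b - 1, by omega⟩
      have hq : (a', b', c+2) ∈ Zfac (2*j+5) s :=
        (mem_Zfac j s _ _ _).mpr (by rw [← heq]; ring)
      rw [hp, Set.mem_singleton_iff] at hq
      simp only [Prod.mk.injEq] at hq
      omega
    -- if c = 1 then a ≤ 3j+4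
    have r3 : c = 0 ∨ a ≤ 3*j+4 := by
      by_cases h0 : c = 0
      · exact Or.inl h0
      right
      have hc1 : c = 1 := by omega
      subst hc1
      by_contra h
      push_neg at h
      obtain ⟨a', rfl⟩ : ∃ a', a = a' + (3*j+5) := ⟨a - (3*j+5), by omega⟩
      have hq : (a', b+(j+3), 0) ∈ Zfac (2*j+5) s :=
        (mem_Zfac j s _ _ _).mpr (by rw [← heq]; ring)
      rw [hp, Set.mem_singleton_iff] at hq
      simp only [Prod.mk.injEq] at hq
      omega
    -- if c = 1 then b ≤ j
    have r4 : c = 0 ∨ b ≤ j := by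
      by_cases h0 : c = 0
      · exact Or.inl h0
      right
      have hc1 : c = 1 := by omega
      subst hc1
      by_contra h
      push_neg at h
      have : b = j+1 ∨ b = j+2 := by omega
      rcases this with rfl | rfl
      · exact hs2 ⟨(a+1)*(2*j+5),
          Or.inl ⟨a+1, 0, 0, by rw [e2, e3]; ring⟩,
          by rw [hF, ← heq]; ring⟩
      · exact hs2 ⟨(a+1)*(2*j+5) + (6*j+13),
          Or.inl ⟨a+1, 1, 0, by rw [e2, e3]; ring⟩,
          by rw [hF, ← heq]; ring⟩
    -- if c = 0 and a = 2 then b ≤ j+1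
    have r5 : c = 1 ∨ a ≠ 2 ∨ b ≤ j+1 := by
      by_cases h0 : c = 0
      swap
      · exact Or.inl (by omega)
      subst h0
      by_cases h1 : a = 2
      swap
      · exact Or.inr (Or.inl h1)
      subst h1
      right; right
      by_contra h
      push_neg at h
      have hb2 : b = j+2 := by omega
      subst hb2
      exact hs2 ⟨6*j+14,
        Or.inl ⟨0, 0, 1, by rw [e2, e3]; ring⟩,
        by rw [hF, ← heq]; ring⟩
    refine ⟨a, b, c, ⟨hpm, ?_, ?_, ?_⟩, by omega⟩
    · show c < 2; omega
    · show b < (2*j+5+1)/2; omega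
    · show a < (3*(2*j+5)-1)/2; omega
  · -- backward direction
    rintro ⟨x, y, z, ⟨hmem, hzlt, hylt, hxlt⟩, hreg⟩
    have hx : x ≤ 3*j+6 := by omega
    have hy : y ≤ j+2 := by omega
    have hz : z ≤ 1 := by omega
    have hr1 : ¬(y = j+2 ∧ z = 1) := by omega
    have hr2 : 1 ≤ y → x ≤ 2 := by omega
    have hr3 : z = 1 → x ≤ 3*j+4 := by omega
    have hxy : x*(2*j+5) + y*(6*j+13) + z*(6*j+14) = s := (mem_Zfac j s x y z).mp hmem
    have hset : Zfac (2*j+5) s = {(x, y, z)} := by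
      ext ⟨a, b, c⟩
      simp only [Set.mem_singleton_iff, Prod.mk.injEq]
      constructor
      · intro hq
        exact key j a b c x y z (((mem_Zfac j s a b c).mp hq).trans hxy.symm)
          hz hy hx hr1 hr2 hr3
      · rintro ⟨rfl, rfl, rfl⟩
        exact hmem
    rw [hset]
    exact Set.ncard_singleton _
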